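/- arXiv:2509.14598 — 2 statements merged into one kernel-verified Lean document; each statement's English description precedes it below -/
import Mathlib

section
/- The control-arm variance estimator is conservative in expectation: under the stepped-wedge randomization, E[V̂ar(τ̂0)] ≥ Var(τ̂0), where V̂ar(τ̂0)(σ) = (1/N²)·[ Σ_{i,j} (1 − Z_{ij})·(e_j/(1 − e_j)²)·r0(i,j)² + Σ_{(i,j) ≠ (i′,j′), e⁰⁰ > 0} (1 − Z_{ij})·(1 − Z_{i′j′})·((e⁰⁰_{(i,j),(i′,j′)} − (1 − e_j)·(1 − e_{j′}))/(e⁰⁰_{(i,j),(i′,j′)}·(1 − e_j)·(1 − e_{j′})))·r0(i,j)·r0(i′,j′) + Σ_{(i,j) ≠ (i′,j′), e⁰⁰ = 0} ( (1 − Z_{ij})·r0(i,j)²/(2(1 − e_j)) + (1 − Z_{i′j′})·r0(i′,j′)²/(2(1 − e_{j′})) ) ], with both pair sums over ordered pairs of distinct cluster-periods. -/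
open Finset
open scoped Classical

noncomputable section

/-- Probability of an event under the uniform random permutation of `Fin I`
(each of the `I!` permutations has probability `1/I!`). -/
def swProb (I : ℕ) (p : Equiv.Perm (Fin I) → Prop) : ℝ :=
  ((Finset.univ.filter p).card : ℝ) / (Nat.factorial I : ℝ)

/-- Expectation of a real statistic under the uniform random permutation of `Fin I`. -/
def swExp (I : ℕ) (f : Equiv.Perm (Fin I) → ℝ) : ℝ :=
  (∑ σ : Equiv.Perm (Fin I), f σ) / (Nat.factorial I : ℝ)

/-- Variance with respect to the uniform random permutation. -/
def swVar (I : ℕ) (f : Equiv.Perm (Fin I) → ℝ) : ℝ :=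
  swExp I (fun σ => (f σ - swExp I f) ^ 2)

/-- Covariance with respect to the uniform random permutation. -/
def swCov (I : ℕ) (f g : Equiv.Perm (Fin I) → ℝ) : ℝ :=
  swExp I (fun σ => (f σ - swExp I f) * (g σ - swExp I g))

/-- Treatment indicator: cluster `i` is treated in period `j` iff its position
`σ(i) + 1` (in `{1,…,I}`) is at most the treated count `T j`. -/
def swZ (I : ℕ) (T : ℕ → ℕ) (σ : Equiv.Perm (Fin I)) (i : Fin I) (j : ℕ) : ℕ :=
  if (σ i : ℕ) < T j then 1 else 0

/-- Cluster-level propensity score `e_j = I_j / I`. -/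
def swE (I : ℕ) (T : ℕ → ℕ) (j : ℕ) : ℝ := (T j : ℝ) / (I : ℝ)

/-- Joint probability that both cluster-periods are treated. -/
def swE11 (I : ℕ) (T : ℕ → ℕ) (p q : Fin I × ℕ) : ℝ :=
  swProb I (fun σ => swZ I T σ p.1 p.2 = 1 ∧ swZ I T σ q.1 q.2 = 1)

/-- Joint probability that both cluster-periods are untreated. -/
def swE00 (I : ℕ) (T : ℕ → ℕ) (p q : Fin I × ℕ) : ℝ :=
  swProb I (fun σ => swZ I T σ p.1 p.2 = 0 ∧ swZ I T σ q.1 q.2 = 0)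

/-- Joint probability that the first cluster-period is treated and the second untreated. -/
def swE10 (I : ℕ) (T : ℕ → ℕ) (p q : Fin I × ℕ) : ℝ :=
  swProb I (fun σ => swZ I T σ p.1 p.2 = 1 ∧ swZ I T σ q.1 q.2 = 0)

/-- Treated-arm Horvitz–Thompson estimator. -/
def tauHat1 (I J : ℕ) (T : ℕ → ℕ) (N : ℝ) (r1 : Fin I → ℕ → ℝ)
    (σ : Equiv.Perm (Fin I)) : ℝ :=
  (1 / N) * ∑ i : Fin I, ∑ j ∈ Finset.Icc 1 J, (swZ I T σ i j : ℝ) * r1 i j / swE I T j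

/-- Control-arm Horvitz–Thompson estimator. -/
def tauHat0 (I J : ℕ) (T : ℕ → ℕ) (N : ℝ) (r0 : Fin I → ℕ → ℝ)
    (σ : Equiv.Perm (Fin I)) : ℝ :=
  (1 / N) * ∑ i : Fin I, ∑ j ∈ Finset.Icc 1 J,
    (1 - (swZ I T σ i j : ℝ)) * r0 i j / (1 - swE I T j)

/-- Horvitz–Thompson estimator of the residualized average treatment effect. -/
def tauHatD (I J : ℕ) (T : ℕ → ℕ) (N : ℝ) (r1 r0 : Fin I → ℕ → ℝ)
    (σ : Equiv.Perm (Fin I)) : ℝ :=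
  (1 / N) * ∑ i : Fin I, ∑ j ∈ Finset.Icc 1 J,
    ((swZ I T σ i j : ℝ) * r1 i j / swE I T j
      - (1 - (swZ I T σ i j : ℝ)) * r0 i j / (1 - swE I T j))

/-- Treated-arm variance estimator. -/
def varHat1 (I J : ℕ) (T : ℕ → ℕ) (N : ℝ) (r1 : Fin I → ℕ → ℝ)
    (σ : Equiv.Perm (Fin I)) : ℝ :=
  (1 / N ^ 2) *
    ((∑ p ∈ Finset.univ ×ˢ Finset.Icc 1 J,
        (swZ I T σ p.1 p.2 : ℝ) * ((1 - swE I T p.2) / (swE I T p.2) ^ 2) * (r1 p.1 p.2) ^ 2)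
      + (∑ p ∈ Finset.univ ×ˢ Finset.Icc 1 J, ∑ q ∈ Finset.univ ×ˢ Finset.Icc 1 J,
          if p ≠ q ∧ 0 < swE11 I T p q then
            (swZ I T σ p.1 p.2 : ℝ) * (swZ I T σ q.1 q.2 : ℝ) *
              ((swE11 I T p q - swE I T p.2 * swE I T q.2) /
                (swE11 I T p q * swE I T p.2 * swE I T q.2)) *
              r1 p.1 p.2 * r1 q.1 q.2
          else 0)
      + (∑ p ∈ Finset.univ ×ˢ Finset.Icc 1 J, ∑ q ∈ Finset.univ ×ˢ Finset.Icc 1 J,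
          if p ≠ q ∧ swE11 I T p q = 0 then
            (swZ I T σ p.1 p.2 : ℝ) * (r1 p.1 p.2) ^ 2 / (2 * swE I T p.2)
              + (swZ I T σ q.1 q.2 : ℝ) * (r1 q.1 q.2) ^ 2 / (2 * swE I T q.2)
          else 0))

/-- Control-arm variance estimator. -/
def varHat0 (I J : ℕ) (T : ℕ → ℕ) (N : ℝ) (r0 : Fin I → ℕ → ℝ)
    (σ : Equiv.Perm (Fin I)) : ℝ :=
  (1 / N ^ 2) *
    ((∑ p ∈ Finset.univ ×ˢ Finset.Icc 1 J,
        (1 - (swZ I T σ p.1 p.2 : ℝ)) * (swE I T p.2 / (1 - swE I T p.2) ^ 2) * (r0 p.1 p.2) ^ 2)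
      + (∑ p ∈ Finset.univ ×ˢ Finset.Icc 1 J, ∑ q ∈ Finset.univ ×ˢ Finset.Icc 1 J,
          if p ≠ q ∧ 0 < swE00 I T p q then
            (1 - (swZ I T σ p.1 p.2 : ℝ)) * (1 - (swZ I T σ q.1 q.2 : ℝ)) *
              ((swE00 I T p q - (1 - swE I T p.2) * (1 - swE I T q.2)) /
                (swE00 I T p q * (1 - swE I T p.2) * (1 - swE I T q.2))) *
              r0 p.1 p.2 * r0 q.1 q.2
          else 0)
      + (∑ p ∈ Finset.univ ×ˢ Finset.Icc 1 J, ∑ q ∈ Finset.univ ×ˢ Finset.Icc 1 J,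
          if p ≠ q ∧ swE00 I T p q = 0 then
            (1 - (swZ I T σ p.1 p.2 : ℝ)) * (r0 p.1 p.2) ^ 2 / (2 * (1 - swE I T p.2))
              + (1 - (swZ I T σ q.1 q.2 : ℝ)) * (r0 q.1 q.2) ^ 2 / (2 * (1 - swE I T q.2))
          else 0))

/-- Covariance estimator. -/
def covHat (I J : ℕ) (T : ℕ → ℕ) (N : ℝ) (r1 r0 : Fin I → ℕ → ℝ)
    (σ : Equiv.Perm (Fin I)) : ℝ :=
  -(1 / N ^ 2) *
      (∑ p ∈ Finset.univ ×ˢ Finset.Icc 1 J, ∑ q ∈ Finset.univ ×ˢ Finset.Icc 1 J,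
        if swE10 I T p q = 0 then
          (swZ I T σ p.1 p.2 : ℝ) * (r1 p.1 p.2) ^ 2 / (2 * swE I T p.2)
            + (1 - (swZ I T σ q.1 q.2 : ℝ)) * (r0 q.1 q.2) ^ 2 / (2 * (1 - swE I T q.2))
        else 0)
    + (1 / N ^ 2) *
      (∑ p ∈ Finset.univ ×ˢ Finset.Icc 1 J, ∑ q ∈ Finset.univ ×ˢ Finset.Icc 1 J,
        if p ≠ q ∧ 0 < swE10 I T p q then
          (swZ I T σ p.1 p.2 : ℝ) * (1 - (swZ I T σ q.1 q.2 : ℝ)) *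
            ((swE10 I T p q - swE I T p.2 * (1 - swE I T q.2)) /
              (swE10 I T p q * swE I T p.2 * (1 - swE I T q.2))) *
            r1 p.1 p.2 * r0 q.1 q.2
        else 0)

/-- The adoption period of a cluster placed `l`-th in line:
`P_l = min { j ∈ {1,…,J} : l ≤ I_j }` if `l ≤ I_J`, and `J + 1` otherwise. -/
def swP (J : ℕ) (T : ℕ → ℕ) (l : ℕ) : ℕ :=
  if l ≤ T J then sInf {j | 1 ≤ j ∧ j ≤ J ∧ l ≤ T j} else J + 1

/-- The combinatorial matrix entry `c(i, l)`. -/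
def swC (I J : ℕ) (T : ℕ → ℕ) (N : ℝ) (r1 r0 : Fin I → ℕ → ℝ)
    (i : Fin I) (l : ℕ) : ℝ :=
  (1 / N) * ((∑ j ∈ Finset.Icc (swP J T l) J, r1 i j / swE I T j)
    - ∑ j ∈ Finset.Icc 1 (swP J T l - 1), r0 i j / (1 - swE I T j))


lemma sw_fact_ne (I : ℕ) : ((Nat.factorial I : ℝ)) ≠ 0 := by
  exact_mod_cast (Nat.factorial_pos I).ne'

lemma swExp_add (I : ℕ) (f g : Equiv.Perm (Fin I) → ℝ) :
    swExp I (fun σ => f σ + g σ) = swExp I f + swExp I g := by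
  unfold swExp; rw [Finset.sum_add_distrib, add_div]

lemma swExp_sum {α : Type*} (I : ℕ) (s : Finset α) (f : α → Equiv.Perm (Fin I) → ℝ) :
    swExp I (fun σ => ∑ p ∈ s, f p σ) = ∑ p ∈ s, swExp I (f p) := by
  unfold swExp; rw [Finset.sum_comm, Finset.sum_div]

lemma swExp_const_mul (I : ℕ) (c : ℝ) (f : Equiv.Perm (Fin I) → ℝ) :
    swExp I (fun σ => c * f σ) = c * swExp I f := by
  unfold swExp; rw [← Finset.mul_sum, mul_div_assoc]

lemma swExp_const (I : ℕ) (c : ℝ) : swExp I (fun _ => c) = c := by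
  unfold swExp
  rw [Finset.sum_const, Finset.card_univ, Fintype.card_perm, Fintype.card_fin,
    nsmul_eq_mul]
  field_simp

lemma swExp_indicator (I : ℕ) (p : Equiv.Perm (Fin I) → Prop) [DecidablePred p] :
    swExp I (fun σ => if p σ then (1:ℝ) else 0) = swProb I p := by
  unfold swExp swProb
  rw [Finset.sum_boole]
  congr 2
  apply Finset.card_bij (fun a _ => a)
  · intro a ha
    simp only [Finset.mem_filter, Finset.mem_univ, true_and] at ha ⊢
    exact ha
  · intro a _ b _ hab
    exact hab
  · intro b hb
    simp only [Finset.mem_filter, Finset.mem_univ, true_and] at hb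
    exact ⟨b, by simp [hb], rfl⟩

lemma swExp_ite (I : ℕ) (c : Prop) [Decidable c] (f g : Equiv.Perm (Fin I) → ℝ) :
    swExp I (fun σ => if c then f σ else g σ) = if c then swExp I f else swExp I g := by
  split_ifs <;> rfl

lemma swCov_eq (I : ℕ) (f g : Equiv.Perm (Fin I) → ℝ) :
    swCov I f g = swExp I (fun σ => f σ * g σ) - swExp I f * swExp I g := by
  unfold swCov
  have h : ∀ σ, (f σ - swExp I f) * (g σ - swExp I g)
      = f σ * g σ + ((- swExp I g) * f σ + ((- swExp I f) * g σ + swExp I f * swExp I g)) := by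
    intro σ; ring
  rw [show (fun σ => (f σ - swExp I f) * (g σ - swExp I g))
      = fun σ => f σ * g σ + ((- swExp I g) * f σ + ((- swExp I f) * g σ + swExp I f * swExp I g))
    from funext h]
  rw [swExp_add, swExp_add, swExp_add, swExp_const_mul, swExp_const_mul, swExp_const]
  ring

lemma swVar_eq (I : ℕ) (f : Equiv.Perm (Fin I) → ℝ) :
    swVar I f = swExp I (fun σ => f σ * f σ) - swExp I f * swExp I f := by
  rw [← swCov_eq]
  unfold swVar swCov
  congr 1; funext σ; ring

lemma swVar_smul (I : ℕ) (c : ℝ) (f : Equiv.Perm (Fin I) → ℝ) :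
    swVar I (fun σ => c * f σ) = c ^ 2 * swVar I f := by
  rw [swVar_eq, swVar_eq, swExp_const_mul]
  rw [show (fun σ => c * f σ * (c * f σ)) = fun σ => (c * c) * (f σ * f σ) from
    funext fun σ => by ring, swExp_const_mul]
  ring

lemma swVar_sum {α : Type*} (I : ℕ) (s : Finset α) (f : α → Equiv.Perm (Fin I) → ℝ) :
    swVar I (fun σ => ∑ p ∈ s, f p σ) = ∑ p ∈ s, ∑ q ∈ s, swCov I (f p) (f q) := by
  rw [swVar_eq]
  have h1 : (fun σ => (∑ p ∈ s, f p σ) * (∑ q ∈ s, f q σ))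
      = fun σ => ∑ p ∈ s, ∑ q ∈ s, f p σ * f q σ := by
    funext σ; rw [Finset.sum_mul_sum]
  rw [h1, swExp_sum, swExp_sum]
  simp only [swExp_sum]
  rw [Finset.sum_mul_sum]
  rw [← Finset.sum_sub_distrib]
  refine Finset.sum_congr rfl fun p _ => ?_
  rw [← Finset.sum_sub_distrib]
  refine Finset.sum_congr rfl fun q _ => ?_
  rw [swCov_eq]

lemma sw_card_fiber_eq (I : ℕ) (i k k' : Fin I) :
    (univ.filter fun σ : Equiv.Perm (Fin I) => σ i = k).card
      = (univ.filter fun σ : Equiv.Perm (Fin I) => σ i = k').card := by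
  apply Finset.card_bij' (fun σ _ => Equiv.swap k k' * σ) (fun σ _ => Equiv.swap k k' * σ)
  · intro σ hσ
    simp only [Finset.mem_filter, Finset.mem_univ, true_and] at hσ ⊢
    simp [hσ, Equiv.swap_apply_left]
  · intro σ hσ
    simp only [Finset.mem_filter, Finset.mem_univ, true_and] at hσ ⊢
    simp [hσ, Equiv.swap_apply_right]
  · intro σ _; simp [← mul_assoc]
  · intro σ _; simp [← mul_assoc]

lemma sw_card_fiber (I : ℕ) (hI : 1 ≤ I) (i : Fin I) (k : Fin I) :
    (univ.filter fun σ : Equiv.Perm (Fin I) => σ i = k).card = (I - 1).factorial := by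
  have hpart : (univ : Finset (Equiv.Perm (Fin I))).card
      = ∑ b : Fin I, ((univ : Finset (Equiv.Perm (Fin I))).filter fun σ => σ i = b).card :=
    Finset.card_eq_sum_card_fiberwise (fun x _ => Finset.mem_univ _)
  rw [Finset.sum_congr rfl (fun b _ => sw_card_fiber_eq I i b k), Finset.sum_const] at hpart
  simp only [Finset.card_univ, Fintype.card_perm, Fintype.card_fin, smul_eq_mul] at hpart
  have hfact : I.factorial = I * (I - 1).factorial := by
    obtain ⟨m, rfl⟩ : ∃ m, I = m + 1 := ⟨I - 1, by omega⟩
    simp [Nat.factorial_succ]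
  have := hpart.symm.trans hfact
  exact Nat.eq_of_mul_eq_mul_left (by omega) this

lemma sw_card_fin_lt (I t : ℕ) (ht : t ≤ I) :
    ((univ : Finset (Fin I)).filter fun k : Fin I => (k : ℕ) < t).card = t := by
  have h : ((univ : Finset (Fin I)).filter fun k : Fin I => (k : ℕ) < t)
      = Finset.attachFin (Finset.range t)
        (fun m hm => lt_of_lt_of_le (Finset.mem_range.mp hm) ht) := by
    ext k
    simp [Finset.mem_attachFin, Finset.mem_range]
  rw [h, Finset.card_attachFin, Finset.card_range]

lemma sw_card_lt (I : ℕ) (hI : 1 ≤ I) (i : Fin I) (t : ℕ) (ht : t ≤ I) :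
    (univ.filter fun σ : Equiv.Perm (Fin I) => (σ i : ℕ) < t).card = t * (I - 1).factorial := by
  classical
  rw [Finset.card_eq_sum_card_fiberwise
    (f := fun σ : Equiv.Perm (Fin I) => σ i)
    (t := (univ : Finset (Fin I)).filter fun k : Fin I => (k : ℕ) < t)
    (fun σ hσ => by
      simp only [Finset.mem_coe, Finset.mem_filter, Finset.mem_univ, true_and] at hσ ⊢
      exact hσ)]
  have hfib : ∀ b ∈ (univ : Finset (Fin I)).filter fun k : Fin I => (k : ℕ) < t,
      ((univ.filter fun σ : Equiv.Perm (Fin I) => (σ i : ℕ) < t).filter fun σ => σ i = b).card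
        = (I - 1).factorial := by
    intro b hb
    simp only [Finset.mem_filter, Finset.mem_univ, true_and] at hb
    rw [Finset.filter_filter]
    have heq : (univ.filter fun σ : Equiv.Perm (Fin I) => (σ i : ℕ) < t ∧ σ i = b)
        = univ.filter fun σ : Equiv.Perm (Fin I) => σ i = b := by
      apply Finset.filter_congr
      intro σ _
      constructor
      · exact fun h => h.2
      · exact fun h => ⟨by rw [h]; exact hb, h⟩
    rw [heq]
    exact sw_card_fiber I hI i b
  rw [Finset.sum_congr rfl hfib, Finset.sum_const, sw_card_fin_lt I t ht, smul_eq_mul]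

lemma swExp_sub (I : ℕ) (f g : Equiv.Perm (Fin I) → ℝ) :
    swExp I (fun σ => f σ - g σ) = swExp I f - swExp I g := by
  unfold swExp; rw [Finset.sum_sub_distrib, sub_div]

lemma sw_expZ (I : ℕ) (hI : 1 ≤ I) (T : ℕ → ℕ) (i : Fin I) (j : ℕ) (ht : T j ≤ I) :
    swExp I (fun σ => (swZ I T σ i j : ℝ)) = swE I T j := by
  unfold swExp swE
  have h : (fun σ : Equiv.Perm (Fin I) => ((swZ I T σ i j : ℕ) : ℝ))
      = fun σ => if (σ i : ℕ) < T j then (1:ℝ) else 0 := by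
    funext σ; unfold swZ; split_ifs <;> simp
  rw [h, Finset.sum_boole, sw_card_lt I hI i (T j) ht]
  have hfact : (I.factorial : ℝ) = (I : ℝ) * ((I - 1).factorial : ℝ) := by
    have : I.factorial = I * (I - 1).factorial := by
      obtain ⟨m, rfl⟩ : ∃ m, I = m + 1 := ⟨I - 1, by omega⟩
      simp [Nat.factorial_succ]
    exact_mod_cast this
  rw [hfact]
  have hf : (((I - 1).factorial : ℕ) : ℝ) ≠ 0 := by
    exact_mod_cast (Nat.factorial_pos (I - 1)).ne'
  have hI0 : (I : ℝ) ≠ 0 := by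
    have : 0 < I := by omega
    exact_mod_cast this.ne'
  push_cast
  field_simp

lemma sw_expOneSubZ (I : ℕ) (hI : 1 ≤ I) (T : ℕ → ℕ) (i : Fin I) (j : ℕ) (ht : T j ≤ I) :
    swExp I (fun σ => 1 - (swZ I T σ i j : ℝ)) = 1 - swE I T j := by
  rw [swExp_sub I (fun _ => 1) (fun σ => (swZ I T σ i j : ℝ)), swExp_const,
    sw_expZ I hI T i j ht]

lemma sw_expZZ (I : ℕ) (T : ℕ → ℕ) (p q : Fin I × ℕ) :
    swExp I (fun σ => (1 - (swZ I T σ p.1 p.2 : ℝ)) * (1 - (swZ I T σ q.1 q.2 : ℝ)))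
      = swE00 I T p q := by
  have h : (fun σ : Equiv.Perm (Fin I) =>
      (1 - (swZ I T σ p.1 p.2 : ℝ)) * (1 - (swZ I T σ q.1 q.2 : ℝ)))
      = fun σ => if (swZ I T σ p.1 p.2 = 0 ∧ swZ I T σ q.1 q.2 = 0) then (1:ℝ) else 0 := by
    funext σ
    unfold swZ
    split_ifs with h1 h2 h2 <;> simp_all
  rw [h]
  exact swExp_indicator I _

lemma sw_e00_self (I : ℕ) (hI : 1 ≤ I) (T : ℕ → ℕ) (p : Fin I × ℕ) (ht : T p.2 ≤ I) :
    swE00 I T p p = 1 - swE I T p.2 := by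
  rw [← sw_expZZ I T p p, ← sw_expOneSubZ I hI T p.1 p.2 ht]
  congr 1
  funext σ
  unfold swZ
  split_ifs <;> ring

lemma sw_e00_nonneg (I : ℕ) (T : ℕ → ℕ) (p q : Fin I × ℕ) : 0 ≤ swE00 I T p q := by
  unfold swE00 swProb
  positivity

def swB (I : ℕ) (T : ℕ → ℕ) (r0 : Fin I → ℕ → ℝ) (p : Fin I × ℕ)
    (σ : Equiv.Perm (Fin I)) : ℝ :=
  (1 - (swZ I T σ p.1 p.2 : ℝ)) * r0 p.1 p.2 / (1 - swE I T p.2)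

lemma sw_expB (I : ℕ) (hI : 1 ≤ I) (T : ℕ → ℕ) (r0 : Fin I → ℕ → ℝ) (p : Fin I × ℕ)
    (ht : T p.2 ≤ I) (hep : swE I T p.2 ≠ 1) :
    swExp I (swB I T r0 p) = r0 p.1 p.2 := by
  have h : swB I T r0 p = fun σ =>
      (r0 p.1 p.2 / (1 - swE I T p.2)) * (1 - (swZ I T σ p.1 p.2 : ℝ)) := by
    funext σ; unfold swB; ring
  rw [h, swExp_const_mul, sw_expOneSubZ I hI T p.1 p.2 ht]
  have h1 : (1 : ℝ) - swE I T p.2 ≠ 0 := sub_ne_zero.mpr (Ne.symm hep)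
  field_simp

lemma sw_expBB (I : ℕ) (T : ℕ → ℕ) (r0 : Fin I → ℕ → ℝ) (p q : Fin I × ℕ) :
    swExp I (fun σ => swB I T r0 p σ * swB I T r0 q σ)
      = swE00 I T p q * (r0 p.1 p.2 / (1 - swE I T p.2)) * (r0 q.1 q.2 / (1 - swE I T q.2)) := by
  have h : (fun σ => swB I T r0 p σ * swB I T r0 q σ)
      = fun σ => ((r0 p.1 p.2 / (1 - swE I T p.2)) * (r0 q.1 q.2 / (1 - swE I T q.2)))
          * ((1 - (swZ I T σ p.1 p.2 : ℝ)) * (1 - (swZ I T σ q.1 q.2 : ℝ))) := by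
    funext σ; unfold swB; ring
  rw [h, swExp_const_mul, sw_expZZ I T p q]
  ring

lemma sw_covB (I : ℕ) (hI : 1 ≤ I) (T : ℕ → ℕ) (r0 : Fin I → ℕ → ℝ) (p q : Fin I × ℕ)
    (htp : T p.2 ≤ I) (htq : T q.2 ≤ I)
    (hep : swE I T p.2 ≠ 1) (heq : swE I T q.2 ≠ 1) :
    swCov I (swB I T r0 p) (swB I T r0 q)
      = swE00 I T p q * (r0 p.1 p.2 / (1 - swE I T p.2)) * (r0 q.1 q.2 / (1 - swE I T q.2))
        - r0 p.1 p.2 * r0 q.1 q.2 := by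
  rw [swCov_eq, sw_expBB, sw_expB I hI T r0 p htp hep, sw_expB I hI T r0 q htq heq]


theorem statement15
    (I J : ℕ) (hI : 2 ≤ I) (hJ : 1 ≤ J)
    (T : ℕ → ℕ)
    (hmono : ∀ j j', 1 ≤ j → j ≤ j' → j' ≤ J → T j ≤ T j')
    (hlb : ∀ j, 1 ≤ j → j ≤ J → 1 ≤ T j)
    (hub : ∀ j, 1 ≤ j → j ≤ J → T j ≤ I - 1)
    (N : ℝ) (hN : 0 < N) (r0 : Fin I → ℕ → ℝ) :
    swVar I (tauHat0 I J T N r0) ≤ swExp I (varHat0 I J T N r0) := by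
  classical
  have hI1 : 1 ≤ I := by omega
  have hIpos : (0:ℝ) < I := by exact_mod_cast (by omega : 0 < I)
  have hmem : ∀ p : Fin I × ℕ, p ∈ (Finset.univ ×ˢ Finset.Icc 1 J : Finset (Fin I × ℕ)) →
      1 ≤ p.2 ∧ p.2 ≤ J := by
    intro p hp
    rw [Finset.mem_product, Finset.mem_Icc] at hp
    exact hp.2
  have htle : ∀ p : Fin I × ℕ, p ∈ (Finset.univ ×ˢ Finset.Icc 1 J : Finset (Fin I × ℕ)) →
      T p.2 ≤ I := fun p hp =>
    le_trans (hub p.2 (hmem p hp).1 (hmem p hp).2) (by omega)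
  have hene : ∀ p : Fin I × ℕ, p ∈ (Finset.univ ×ˢ Finset.Icc 1 J : Finset (Fin I × ℕ)) →
      swE I T p.2 ≠ 1 := by
    intro p hp
    have h1 := hub p.2 (hmem p hp).1 (hmem p hp).2
    have : swE I T p.2 < 1 := by
      unfold swE
      rw [div_lt_one hIpos]
      exact_mod_cast (by omega : T p.2 < I)
    exact ne_of_lt this
  have h1e : ∀ p : Fin I × ℕ, p ∈ (Finset.univ ×ˢ Finset.Icc 1 J : Finset (Fin I × ℕ)) →
      (1:ℝ) - swE I T p.2 ≠ 0 := fun p hp => sub_ne_zero.mpr (Ne.symm (hene p hp))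
  -- LHS
  have hτ : tauHat0 I J T N r0
      = fun σ => (1/N) * ∑ p ∈ Finset.univ ×ˢ Finset.Icc 1 J, swB I T r0 p σ := by
    funext σ
    unfold tauHat0
    congr 1
    rw [Finset.sum_product]
    rfl
  rw [hτ, swVar_smul, swVar_sum]
  -- RHS expectation
  unfold varHat0
  rw [show (fun σ : Equiv.Perm (Fin I) => (1 / N ^ 2) *
      ((∑ p ∈ Finset.univ ×ˢ Finset.Icc 1 J,
        (1 - (swZ I T σ p.1 p.2 : ℝ)) * (swE I T p.2 / (1 - swE I T p.2) ^ 2) * (r0 p.1 p.2) ^ 2)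
      + (∑ p ∈ Finset.univ ×ˢ Finset.Icc 1 J, ∑ q ∈ Finset.univ ×ˢ Finset.Icc 1 J,
          if p ≠ q ∧ 0 < swE00 I T p q then
            (1 - (swZ I T σ p.1 p.2 : ℝ)) * (1 - (swZ I T σ q.1 q.2 : ℝ)) *
              ((swE00 I T p q - (1 - swE I T p.2) * (1 - swE I T q.2)) /
                (swE00 I T p q * (1 - swE I T p.2) * (1 - swE I T q.2))) *
              r0 p.1 p.2 * r0 q.1 q.2
          else 0)
      + (∑ p ∈ Finset.univ ×ˢ Finset.Icc 1 J, ∑ q ∈ Finset.univ ×ˢ Finset.Icc 1 J,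
          if p ≠ q ∧ swE00 I T p q = 0 then
            (1 - (swZ I T σ p.1 p.2 : ℝ)) * (r0 p.1 p.2) ^ 2 / (2 * (1 - swE I T p.2))
              + (1 - (swZ I T σ q.1 q.2 : ℝ)) * (r0 q.1 q.2) ^ 2 / (2 * (1 - swE I T q.2))
          else 0))) = fun σ => (1 / N ^ 2) * ((∑ p ∈ Finset.univ ×ˢ Finset.Icc 1 J,
        (1 - (swZ I T σ p.1 p.2 : ℝ)) * (swE I T p.2 / (1 - swE I T p.2) ^ 2) * (r0 p.1 p.2) ^ 2)
      + ((∑ p ∈ Finset.univ ×ˢ Finset.Icc 1 J, ∑ q ∈ Finset.univ ×ˢ Finset.Icc 1 J,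
          if p ≠ q ∧ 0 < swE00 I T p q then
            (1 - (swZ I T σ p.1 p.2 : ℝ)) * (1 - (swZ I T σ q.1 q.2 : ℝ)) *
              ((swE00 I T p q - (1 - swE I T p.2) * (1 - swE I T q.2)) /
                (swE00 I T p q * (1 - swE I T p.2) * (1 - swE I T q.2))) *
              r0 p.1 p.2 * r0 q.1 q.2
          else 0)
      + (∑ p ∈ Finset.univ ×ˢ Finset.Icc 1 J, ∑ q ∈ Finset.univ ×ˢ Finset.Icc 1 J,
          if p ≠ q ∧ swE00 I T p q = 0 then
            (1 - (swZ I T σ p.1 p.2 : ℝ)) * (r0 p.1 p.2) ^ 2 / (2 * (1 - swE I T p.2))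
              + (1 - (swZ I T σ q.1 q.2 : ℝ)) * (r0 q.1 q.2) ^ 2 / (2 * (1 - swE I T q.2))
          else 0))) from funext fun σ => by ring]
  simp only [swExp_const_mul, swExp_add, swExp_sum]
  rw [one_div_pow]
  -- per-term expectation values
  have ht1 : ∀ p ∈ (Finset.univ ×ˢ Finset.Icc 1 J : Finset (Fin I × ℕ)),
      (swExp I fun σ => (1 - (swZ I T σ p.1 p.2 : ℝ)) * (swE I T p.2 / (1 - swE I T p.2) ^ 2)
        * r0 p.1 p.2 ^ 2)
      = (swE I T p.2 / (1 - swE I T p.2) ^ 2 * r0 p.1 p.2 ^ 2) * (1 - swE I T p.2) := by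
    intro p hp
    rw [show (fun σ => (1 - (swZ I T σ p.1 p.2 : ℝ)) * (swE I T p.2 / (1 - swE I T p.2) ^ 2)
          * r0 p.1 p.2 ^ 2)
        = fun σ => (swE I T p.2 / (1 - swE I T p.2) ^ 2 * r0 p.1 p.2 ^ 2)
          * (1 - (swZ I T σ p.1 p.2 : ℝ)) from funext fun σ => by ring]
    rw [swExp_const_mul, sw_expOneSubZ I hI1 T p.1 p.2 (htle p hp)]
  have ht2 : ∀ p q : Fin I × ℕ,
      (swExp I fun σ =>
        if p ≠ q ∧ 0 < swE00 I T p q then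
          (1 - (swZ I T σ p.1 p.2 : ℝ)) * (1 - (swZ I T σ q.1 q.2 : ℝ)) *
              ((swE00 I T p q - (1 - swE I T p.2) * (1 - swE I T q.2)) /
                (swE00 I T p q * (1 - swE I T p.2) * (1 - swE I T q.2))) *
            r0 p.1 p.2 * r0 q.1 q.2
        else 0)
      = if p ≠ q ∧ 0 < swE00 I T p q then
          ((swE00 I T p q - (1 - swE I T p.2) * (1 - swE I T q.2)) /
            (swE00 I T p q * (1 - swE I T p.2) * (1 - swE I T q.2))
            * r0 p.1 p.2 * r0 q.1 q.2) * swE00 I T p q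
        else 0 := by
    intro p q
    rw [swExp_ite]
    split_ifs with hc
    · rw [show (fun σ => (1 - (swZ I T σ p.1 p.2 : ℝ)) * (1 - (swZ I T σ q.1 q.2 : ℝ)) *
              ((swE00 I T p q - (1 - swE I T p.2) * (1 - swE I T q.2)) /
                (swE00 I T p q * (1 - swE I T p.2) * (1 - swE I T q.2))) *
            r0 p.1 p.2 * r0 q.1 q.2)
          = fun σ => ((swE00 I T p q - (1 - swE I T p.2) * (1 - swE I T q.2)) /
            (swE00 I T p q * (1 - swE I T p.2) * (1 - swE I T q.2))
            * r0 p.1 p.2 * r0 q.1 q.2)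
              * ((1 - (swZ I T σ p.1 p.2 : ℝ)) * (1 - (swZ I T σ q.1 q.2 : ℝ)))
          from funext fun σ => by ring]
      rw [swExp_const_mul, sw_expZZ I T p q]
    · exact swExp_const I 0
  have ht3 : ∀ p ∈ (Finset.univ ×ˢ Finset.Icc 1 J : Finset (Fin I × ℕ)),
      ∀ q ∈ (Finset.univ ×ˢ Finset.Icc 1 J : Finset (Fin I × ℕ)),
      (swExp I fun σ =>
        if p ≠ q ∧ swE00 I T p q = 0 then
          (1 - (swZ I T σ p.1 p.2 : ℝ)) * r0 p.1 p.2 ^ 2 / (2 * (1 - swE I T p.2)) +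
            (1 - (swZ I T σ q.1 q.2 : ℝ)) * r0 q.1 q.2 ^ 2 / (2 * (1 - swE I T q.2))
        else 0)
      = if p ≠ q ∧ swE00 I T p q = 0 then
          (r0 p.1 p.2 ^ 2 / (2 * (1 - swE I T p.2))) * (1 - swE I T p.2) +
            (r0 q.1 q.2 ^ 2 / (2 * (1 - swE I T q.2))) * (1 - swE I T q.2)
        else 0 := by
    intro p hp q hq
    rw [swExp_ite]
    split_ifs with hc
    · rw [show (fun σ =>
          (1 - (swZ I T σ p.1 p.2 : ℝ)) * r0 p.1 p.2 ^ 2 / (2 * (1 - swE I T p.2)) +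
            (1 - (swZ I T σ q.1 q.2 : ℝ)) * r0 q.1 q.2 ^ 2 / (2 * (1 - swE I T q.2)))
          = fun σ => (r0 p.1 p.2 ^ 2 / (2 * (1 - swE I T p.2))) * (1 - (swZ I T σ p.1 p.2 : ℝ))
            + (r0 q.1 q.2 ^ 2 / (2 * (1 - swE I T q.2))) * (1 - (swZ I T σ q.1 q.2 : ℝ))
          from funext fun σ => by ring]
      rw [swExp_add, swExp_const_mul, swExp_const_mul,
        sw_expOneSubZ I hI1 T p.1 p.2 (htle p hp), sw_expOneSubZ I hI1 T q.1 q.2 (htle q hq)]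
    · exact swExp_const I 0
  -- pairwise key inequality
  have key : ∀ p ∈ (Finset.univ ×ˢ Finset.Icc 1 J : Finset (Fin I × ℕ)),
      ∀ q ∈ (Finset.univ ×ˢ Finset.Icc 1 J : Finset (Fin I × ℕ)),
      swCov I (swB I T r0 p) (swB I T r0 q)
        ≤ (if q = p then
            (swE I T p.2 / (1 - swE I T p.2) ^ 2 * r0 p.1 p.2 ^ 2) * (1 - swE I T p.2) else 0)
          + ((if p ≠ q ∧ 0 < swE00 I T p q then
              ((swE00 I T p q - (1 - swE I T p.2) * (1 - swE I T q.2)) /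
                (swE00 I T p q * (1 - swE I T p.2) * (1 - swE I T q.2))
                * r0 p.1 p.2 * r0 q.1 q.2) * swE00 I T p q
            else 0)
          + (if p ≠ q ∧ swE00 I T p q = 0 then
              (r0 p.1 p.2 ^ 2 / (2 * (1 - swE I T p.2))) * (1 - swE I T p.2) +
                (r0 q.1 q.2 ^ 2 / (2 * (1 - swE I T q.2))) * (1 - swE I T q.2)
            else 0)) := by
    intro p hp q hq
    rw [sw_covB I hI1 T r0 p q (htle p hp) (htle q hq) (hene p hp) (hene q hq)]
    by_cases hqp : q = p
    · subst hqp
      rw [if_pos rfl, if_neg (fun h => h.1 rfl), if_neg (fun h => h.1 rfl),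
        sw_e00_self I hI1 T q (htle q hq)]
      apply le_of_eq
      have h1 := h1e q hq
      field_simp
      ring
    · rw [if_neg hqp]
      have hpq : p ≠ q := fun h => hqp h.symm
      have h1p := h1e p hp
      have h1q := h1e q hq
      by_cases h00 : swE00 I T p q = 0
      · rw [if_neg (fun h => by rw [h00] at h; exact lt_irrefl 0 h.2), if_pos ⟨hpq, h00⟩, h00]
        have e1 : r0 p.1 p.2 ^ 2 / (2 * (1 - swE I T p.2)) * (1 - swE I T p.2)
            = r0 p.1 p.2 ^ 2 / 2 := by field_simp
        have e2 : r0 q.1 q.2 ^ 2 / (2 * (1 - swE I T q.2)) * (1 - swE I T q.2)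
            = r0 q.1 q.2 ^ 2 / 2 := by field_simp
        rw [e1, e2]
        nlinarith [sq_nonneg (r0 p.1 p.2 + r0 q.1 q.2)]
      · have hpos : 0 < swE00 I T p q := lt_of_le_of_ne (sw_e00_nonneg I T p q) (Ne.symm h00)
        rw [if_pos ⟨hpq, hpos⟩, if_neg (fun h => h00 h.2)]
        apply le_of_eq
        field_simp
        ring
  refine mul_le_mul_of_nonneg_left ?_ (by positivity : (0:ℝ) ≤ 1 / N ^ 2)
  refine le_trans
    (Finset.sum_le_sum fun p hp => Finset.sum_le_sum fun q hq => key p hp q hq)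
    (le_of_eq ?_)
  simp only [Finset.sum_add_distrib]
  congr 1
  · refine Finset.sum_congr rfl fun p hp => ?_
    rw [Finset.sum_ite_eq' (Finset.univ ×ˢ Finset.Icc 1 J) p
      (fun _ => (swE I T p.2 / (1 - swE I T p.2) ^ 2 * r0 p.1 p.2 ^ 2) * (1 - swE I T p.2)),
      if_pos hp]
    exact (ht1 p hp).symm
  congr 1
  · exact Finset.sum_congr rfl fun p hp => Finset.sum_congr rfl fun q hq => (ht2 p q).symm
  · exact Finset.sum_congr rfl fun p hp => Finset.sum_congr rfl fun q hq =>
      (ht3 p hp q hq).symm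
end
end

section
/- The row means of the combinatorial matrix c are the cluster-level residualized treatment effects, and they sum to the overall estimand: for every cluster i ∈ {1,…,I}, (1/I)·Σ_{l=1}^{I} c(i,l) = (1/N)·Σ_{j=1}^{J} ( r1(i,j) − r0(i,j) ); consequently Σ_{i=1}^{I} (1/I)·Σ_{l=1}^{I} c(i,l) = τ, where τ = (1/N)·Σ_{i,j} ( r1(i,j) − r0(i,j) ). -/
open Finset
open scoped Classical

noncomputable section

lemma swP_pos (J : ℕ) (T : ℕ → ℕ) (hJ : 1 ≤ J) (l : ℕ) : 1 ≤ swP J T l := by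
  unfold swP
  split
  · rename_i h
    have hne : J ∈ {j | 1 ≤ j ∧ j ≤ J ∧ l ≤ T j} := ⟨hJ, le_refl J, h⟩
    exact (Nat.sInf_mem ⟨J, hne⟩).1
  · omega

lemma swP_le_iff (I J : ℕ) (T : ℕ → ℕ) (hJ : 1 ≤ J)
    (hmono : ∀ j j', 1 ≤ j → j ≤ j' → j' ≤ J → T j ≤ T j')
    {l j : ℕ} (hj1 : 1 ≤ j) (hjJ : j ≤ J) :
    swP J T l ≤ j ↔ l ≤ T j := by
  unfold swP
  split
  · rename_i h
    have hne : J ∈ {j | 1 ≤ j ∧ j ≤ J ∧ l ≤ T j} := ⟨hJ, le_refl J, h⟩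
    constructor
    · intro hle
      obtain ⟨h1, h2, h3⟩ := Nat.sInf_mem (⟨J, hne⟩ : Set.Nonempty _)
      exact le_trans h3 (hmono _ _ h1 hle hjJ)
    · intro hlT
      exact Nat.sInf_le ⟨hj1, hjJ, hlT⟩
  · rename_i h
    constructor
    · omega
    · intro hlT
      exact absurd (le_trans hlT (hmono _ _ hj1 hjJ le_rfl)) h

theorem statement19
    (I J : ℕ) (hI : 2 ≤ I) (hJ : 1 ≤ J)
    (T : ℕ → ℕ)
    (hmono : ∀ j j', 1 ≤ j → j ≤ j' → j' ≤ J → T j ≤ T j')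
    (hlb : ∀ j, 1 ≤ j → j ≤ J → 1 ≤ T j)
    (hub : ∀ j, 1 ≤ j → j ≤ J → T j ≤ I - 1)
    (N : ℝ) (hN : 0 < N) (r1 r0 : Fin I → ℕ → ℝ) :
    (∀ i : Fin I,
      (1 / (I : ℝ)) * ∑ l ∈ Finset.Icc 1 I, swC I J T N r1 r0 i l
        = (1 / N) * ∑ j ∈ Finset.Icc 1 J, (r1 i j - r0 i j)) ∧
    (∑ i : Fin I, (1 / (I : ℝ)) * ∑ l ∈ Finset.Icc 1 I, swC I J T N r1 r0 i l
        = (1 / N) * ∑ i : Fin I, ∑ j ∈ Finset.Icc 1 J, (r1 i j - r0 i j)) := by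
  have hIR : (2:ℝ) ≤ (I:ℝ) := by exact_mod_cast hI
  have hI0 : (I:ℝ) ≠ 0 := by linarith
  have swP_le : ∀ l, swP J T l ≤ J + 1 := by
    intro l
    unfold swP
    split
    · rename_i h
      exact le_trans (Nat.sInf_le ⟨hJ, le_rfl, h⟩) (Nat.le_succ J)
    · exact le_rfl
  have main : ∀ i : Fin I,
      ∑ l ∈ Finset.Icc 1 I, swC I J T N r1 r0 i l
        = (I:ℝ) * ((1 / N) * ∑ j ∈ Finset.Icc 1 J, (r1 i j - r0 i j)) := by
    intro i
    have hswC : ∀ l, swC I J T N r1 r0 i l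
        = (1 / N) * ∑ j ∈ Finset.Icc 1 J,
            (if l ≤ T j then r1 i j / swE I T j
             else -(r0 i j / (1 - swE I T j))) := by
      intro l
      unfold swC
      congr 1
      have e1 : Finset.Icc (swP J T l) J
          = (Finset.Icc 1 J).filter (fun j => l ≤ T j) := by
        ext j
        simp only [Finset.mem_Icc, Finset.mem_filter]
        constructor
        · rintro ⟨h1, h2⟩
          have hj1 : 1 ≤ j := le_trans (swP_pos J T hJ l) h1
          exact ⟨⟨hj1, h2⟩, (swP_le_iff I J T hJ hmono hj1 h2).1 h1⟩
        · rintro ⟨⟨hj1, h2⟩, h3⟩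
          exact ⟨(swP_le_iff I J T hJ hmono hj1 h2).2 h3, h2⟩
      have e2 : Finset.Icc 1 (swP J T l - 1)
          = (Finset.Icc 1 J).filter (fun j => ¬ l ≤ T j) := by
        ext j
        simp only [Finset.mem_Icc, Finset.mem_filter]
        constructor
        · rintro ⟨h1, h2⟩
          have hjJ : j ≤ J := by have := swP_le l; omega
          have hnot : ¬ swP J T l ≤ j := by
            have := swP_pos J T hJ l; omega
          exact ⟨⟨h1, hjJ⟩, fun hc =>
            hnot ((swP_le_iff I J T hJ hmono h1 hjJ).2 hc)⟩
        · rintro ⟨⟨h1, h2⟩, h3⟩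
          have hnot : ¬ swP J T l ≤ j :=
            fun hc => h3 ((swP_le_iff I J T hJ hmono h1 h2).1 hc)
          exact ⟨h1, by omega⟩
      rw [e1, e2, Finset.sum_filter, Finset.sum_filter, ← Finset.sum_sub_distrib]
      apply Finset.sum_congr rfl
      intro j _
      by_cases h : l ≤ T j <;> simp [h]
    simp only [hswC]
    rw [← Finset.mul_sum, Finset.sum_comm]
    have key : ∀ j ∈ Finset.Icc 1 J,
        ∑ l ∈ Finset.Icc 1 I,
          (if l ≤ T j then r1 i j / swE I T j
           else -(r0 i j / (1 - swE I T j)))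
        = (I:ℝ) * (r1 i j - r0 i j) := by
      intro j hj
      rw [Finset.mem_Icc] at hj
      have ht1 : 1 ≤ T j := hlb j hj.1 hj.2
      have ht2 : T j ≤ I - 1 := hub j hj.1 hj.2
      have htI : T j ≤ I := by omega
      rw [Finset.sum_ite]
      have f1 : (Finset.Icc 1 I).filter (fun l => l ≤ T j) = Finset.Icc 1 (T j) := by
        ext l; simp only [Finset.mem_Icc, Finset.mem_filter]; omega
      have f2 : (Finset.Icc 1 I).filter (fun l => ¬ l ≤ T j)
          = Finset.Icc (T j + 1) I := by
        ext l; simp only [Finset.mem_Icc, Finset.mem_filter]; omega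
      rw [f1, f2, Finset.sum_const, Finset.sum_const, Nat.card_Icc, Nat.card_Icc]
      have hc1 : T j + 1 - 1 = T j := by omega
      rw [hc1]
      have htR : (1:ℝ) ≤ (T j : ℝ) := by exact_mod_cast ht1
      have htR2 : (T j : ℝ) ≤ (I:ℝ) - 1 := by
        have : (T j : ℝ) ≤ ((I - 1 : ℕ) : ℝ) := by exact_mod_cast ht2
        have h2 : ((I - 1 : ℕ) : ℝ) = (I:ℝ) - 1 := by
          have : (1:ℕ) ≤ I := by omega
          push_cast [this]; ring
        linarith [this, h2.le]
      have hcast : ((I + 1 - (T j + 1) : ℕ) : ℝ) = (I:ℝ) - (T j : ℝ) := by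
        have : I + 1 - (T j + 1) = I - T j := by omega
        rw [this]
        push_cast [htI]
        ring
      rw [nsmul_eq_mul, nsmul_eq_mul, hcast]
      unfold swE
      have hT0 : (T j : ℝ) ≠ 0 := by linarith
      have hlt : (T j : ℝ) < (I:ℝ) := by linarith
      have hIT : (I:ℝ) - (T j : ℝ) ≠ 0 := by linarith
      have hden : 1 - (T j : ℝ) / (I:ℝ) ≠ 0 := by
        have h1 : (T j:ℝ)/(I:ℝ) < 1 := by
          rw [div_lt_one (by linarith)]; exact hlt
        linarith
      field_simp
      ring
    rw [Finset.sum_congr rfl key, ← Finset.mul_sum]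
    ring
  have left : ∀ i : Fin I,
      (1 / (I : ℝ)) * ∑ l ∈ Finset.Icc 1 I, swC I J T N r1 r0 i l
        = (1 / N) * ∑ j ∈ Finset.Icc 1 J, (r1 i j - r0 i j) := by
    intro i
    rw [main i]
    field_simp
  refine ⟨left, ?_⟩
  rw [Finset.sum_congr rfl (fun i _ => left i), Finset.mul_sum]
end
end
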